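/- arXiv:2308.01460 — 4 statements merged into one kernel-verified Lean document; each statement's English description precedes it below -/
import Mathlib

section
/- Let K be a field and R = K[x, y, z]. Let g₁ = x² - y³, g₂ = x² - z⁵, and consider the strict transforms in the z-chart of the blow-up of the origin: g₁' = x'² - y'³·z', g₂' = x'² - z'³, h' = y'³ - z'². Then h' is not contained in the ideal ⟨g₁', g₂'⟩ of K[x', y', z']. -/
open Matrix MvPolynomial

theorem strict_transform_not_in_ideal {K : Type*} [Field K] :
    (X 1 ^ 3 - X 2 ^ 2 : MvPolynomial (Fin 3) K) ∉
      Ideal.span {(X 0 ^ 2 - X 1 ^ 3 * X 2 : MvPolynomial (Fin 3) K),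
        X 0 ^ 2 - X 2 ^ 3} := by
  intro h
  rw [Ideal.mem_span_pair] at h
  obtain ⟨u, v, huv⟩ := h
  have := congrArg (aeval (fun i : Fin 3 => if i = 1 then Polynomial.X else 0 : Fin 3 → Polynomial K)) huv
  simp only [map_add, _root_.map_mul, map_sub, map_pow, aeval_X] at this
  norm_num [show ((2:Fin 3) = 1) = False from by simp [Fin.ext_iff]] at this
  exact pow_ne_zero 3 Polynomial.X_ne_zero this.symm
end

section
/- Let R be a commutative ring and A an m×m skew-symmetric matrix over R (Aᵀ = -A, diagonal zero) with m ≥ 2, A₁₂ = 1 and A₂₁ = -1. Define the (m-2)×(m-2) matrix à by Ã_{ij} = A_{i+2,j+2} - A_{2,j+2}·A_{1,i+2} + A_{1,j+2}·A_{2,i+2}. Then à is skew-symmetric with zero diagonal, and det(A) = det(Ã). -/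
/-!
The top-left 2×2 corner of `A` is `J = !![0, 1; -1, 0]`, which is invertible with `det J = 1`
and `J⁻¹ = -J`. Hence `det A = det J * det (D - C J⁻¹ B)` where `B, C, D` are the remaining
blocks, and with skew-symmetry this Schur complement is exactly `Ã`. That `Ã` is skew-symmetric
with zero diagonal is a direct entrywise check.
-/

open Matrix

def finTwoSumEquiv (m : ℕ) : Fin 2 ⊕ Fin m ≃ Fin (m + 2) :=
  finSumFinEquiv.trans (finCongr (Nat.add_comm 2 m))

@[simp] lemma finTwoSumEquiv_inl_zero {m : ℕ} : finTwoSumEquiv m (.inl 0) = 0 := rfl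

@[simp] lemma finTwoSumEquiv_inl_one {m : ℕ} : finTwoSumEquiv m (.inl 1) = 1 := rfl

@[simp] lemma finTwoSumEquiv_inr {m : ℕ} (i : Fin m) :
    finTwoSumEquiv m (.inr i) = i.succ.succ :=
  Fin.ext (Nat.add_comm 2 i)

namespace Matrix

variable {R : Type*} [CommRing R] {m : ℕ}

instance invertibleStdSymplecticFinTwo :
    Invertible (!![0, 1; -1, 0] : Matrix (Fin 2) (Fin 2) R) where
  invOf := !![0, -1; 1, 0]
  invOf_mul_self := by simp [one_fin_two]
  mul_invOf_self := by simp [one_fin_two]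

lemma invOf_stdSymplecticFinTwo :
    ⅟(!![0, 1; -1, 0] : Matrix (Fin 2) (Fin 2) R) = !![0, -1; 1, 0] :=
  rfl

def cornerSchurComplement (A : Matrix (Fin (m + 2)) (Fin (m + 2)) R) :
    Matrix (Fin m) (Fin m) R :=
  of fun i j => A i.succ.succ j.succ.succ + A i.succ.succ 0 * A 1 j.succ.succ
    - A i.succ.succ 1 * A 0 j.succ.succ

lemma submatrix_finTwoSumEquiv_eq_fromBlocks (A : Matrix (Fin (m + 2)) (Fin (m + 2)) R)
    (h00 : A 0 0 = 0) (h01 : A 0 1 = 1) (h10 : A 1 0 = -1) (h11 : A 1 1 = 0) :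
    A.submatrix (finTwoSumEquiv m) (finTwoSumEquiv m) =
      fromBlocks !![0, 1; -1, 0] (of fun a j => A (finTwoSumEquiv m (.inl a)) j.succ.succ)
        (of fun i b => A i.succ.succ (finTwoSumEquiv m (.inl b)))
        (A.submatrix (·.succ.succ) (·.succ.succ)) := by
  rw [← fromBlocks_toBlocks (A.submatrix _ _)]
  congr
  · ext a b; fin_cases a <;> fin_cases b <;> simp [toBlocks₁₁, h00, h01, h10, h11]
  all_goals ext; simp [toBlocks₁₂, toBlocks₂₁, toBlocks₂₂]

theorem det_eq_det_cornerSchurComplement (A : Matrix (Fin (m + 2)) (Fin (m + 2)) R)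
    (h00 : A 0 0 = 0) (h01 : A 0 1 = 1) (h10 : A 1 0 = -1) (h11 : A 1 1 = 0) :
    A.det = (cornerSchurComplement A).det := by
  rw [← det_submatrix_equiv_self (finTwoSumEquiv m),
    submatrix_finTwoSumEquiv_eq_fromBlocks A h00 h01 h10 h11, det_fromBlocks₁₁,
    det_fin_two_of, mul_zero, zero_sub, mul_neg_one, neg_neg, one_mul]
  congr 1
  ext i j
  rw [invOf_stdSymplecticFinTwo]
  simp only [cornerSchurComplement, sub_apply, submatrix_apply, mul_apply, of_apply, cons_val',
    cons_val_fin_one, Fin.sum_univ_two, finTwoSumEquiv_inl_zero, finTwoSumEquiv_inl_one,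
    cons_val_zero, cons_val_one, mul_zero, mul_one, zero_add, add_zero, mul_neg, neg_mul]
  ring

end Matrix

theorem skew_reduction_step {R : Type*} [CommRing R] {m : ℕ}
    (A : Matrix (Fin (m + 2)) (Fin (m + 2)) R)
    (hA : Aᵀ = -A) (hdiag : ∀ i, A i i = 0)
    (h01 : A 0 1 = 1) (h10 : A 1 0 = -1)
    (At : Matrix (Fin m) (Fin m) R)
    (hAt : ∀ i j, At i j =
      A i.succ.succ j.succ.succ - A 1 j.succ.succ * A 0 i.succ.succ
        + A 0 j.succ.succ * A 1 i.succ.succ) :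
    Atᵀ = -At ∧ (∀ i, At i i = 0) ∧ A.det = At.det := by
  have skew (i j) : A j i = -A i j := by simpa using congrFun₂ hA i j
  refine ⟨?_, fun i => ?_, ?_⟩
  · ext i j
    rw [transpose_apply, neg_apply, hAt, hAt]
    linear_combination skew i.succ.succ j.succ.succ
  · rw [hAt, hdiag]
    ring
  · have hAt_eq : At = cornerSchurComplement A := by
      ext i j
      rw [hAt, cornerSchurComplement, of_apply, skew 0, skew 1]
      ring
    rw [hAt_eq, det_eq_det_cornerSchurComplement A (hdiag 0) h01 h10 (hdiag 1)]
end

section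
/- Let R be a commutative ring and A a 4×4 skew-symmetric matrix over R with zero diagonal and entries x_{ij} above the diagonal. Then every 3-minor of A lies in the ideal generated by the quadratic polynomials x_{ij}·Pf where Pf = x₁₂·x₃₄ - x₁₃·x₂₄ + x₁₄·x₂₃; in particular the ideal of 3-minors of A is contained in the ideal ⟨x₁₂, x₁₃, x₁₄, x₂₃, x₂₄, x₃₄⟩·⟨Pf⟩. -/
open Matrix

private lemma det_sub3 {R : Type*} [CommRing R] (M : Matrix (Fin 4) (Fin 4) R)
    (r c : Fin 3 → Fin 4) :
    (M.submatrix r c).det =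
      M (r 0) (c 0) * M (r 1) (c 1) * M (r 2) (c 2)
      - M (r 0) (c 0) * M (r 1) (c 2) * M (r 2) (c 1)
      - M (r 0) (c 1) * M (r 1) (c 0) * M (r 2) (c 2)
      + M (r 0) (c 1) * M (r 1) (c 2) * M (r 2) (c 0)
      + M (r 0) (c 2) * M (r 1) (c 0) * M (r 2) (c 1)
      - M (r 0) (c 2) * M (r 1) (c 1) * M (r 2) (c 0) := by
  rw [Matrix.det_fin_three]
  simp only [Matrix.submatrix_apply]
  try ring

private lemma sortRows {R : Type*} [CommRing R] (a b d : Fin 4)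
    (hab : a ≠ b) (had : a ≠ d) (hbd : b ≠ d) :
    ∃ p q s : Fin 4, p < q ∧ q < s ∧ ∀ (M : Matrix (Fin 4) (Fin 4) R) (c : Fin 3 → Fin 4),
      (M.submatrix ![a, b, d] c).det = (M.submatrix ![p, q, s] c).det ∨
      (M.submatrix ![a, b, d] c).det = -(M.submatrix ![p, q, s] c).det := by
  rcases hab.lt_or_gt with h1 | h1 <;> rcases had.lt_or_gt with h2 | h2 <;>
    rcases hbd.lt_or_gt with h3 | h3
  · exact ⟨a, b, d, h1, h3, fun M c => Or.inl rfl⟩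
  · exact ⟨a, d, b, h2, h3, fun M c => Or.inr (by
      rw [det_sub3, det_sub3]
      simp only [Matrix.cons_val_zero, Matrix.cons_val_one, Matrix.head_cons,
        Matrix.cons_val_two, Matrix.tail_cons]
      ring)⟩
  · exact absurd (h1.trans h3) h2.asymm
  · exact ⟨d, a, b, h2, h1, fun M c => Or.inl (by
      rw [det_sub3, det_sub3]
      simp only [Matrix.cons_val_zero, Matrix.cons_val_one, Matrix.head_cons,
        Matrix.cons_val_two, Matrix.tail_cons]
      ring)⟩
  · exact ⟨b, a, d, h1, h2, fun M c => Or.inr (by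
      rw [det_sub3, det_sub3]
      simp only [Matrix.cons_val_zero, Matrix.cons_val_one, Matrix.head_cons,
        Matrix.cons_val_two, Matrix.tail_cons]
      ring)⟩
  · exact absurd (h3.trans h1) h2.asymm
  · exact ⟨b, d, a, h3, h2, fun M c => Or.inl (by
      rw [det_sub3, det_sub3]
      simp only [Matrix.cons_val_zero, Matrix.cons_val_one, Matrix.head_cons,
        Matrix.cons_val_two, Matrix.tail_cons]
      ring)⟩
  · exact ⟨d, b, a, h3, h1, fun M c => Or.inr (by
      rw [det_sub3, det_sub3]
      simp only [Matrix.cons_val_zero, Matrix.cons_val_one, Matrix.head_cons,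
        Matrix.cons_val_two, Matrix.tail_cons]
      ring)⟩

private lemma sortCols {R : Type*} [CommRing R] (a b d : Fin 4)
    (hab : a ≠ b) (had : a ≠ d) (hbd : b ≠ d) :
    ∃ p q s : Fin 4, p < q ∧ q < s ∧ ∀ (M : Matrix (Fin 4) (Fin 4) R) (r : Fin 3 → Fin 4),
      (M.submatrix r ![a, b, d]).det = (M.submatrix r ![p, q, s]).det ∨
      (M.submatrix r ![a, b, d]).det = -(M.submatrix r ![p, q, s]).det := by
  rcases hab.lt_or_gt with h1 | h1 <;> rcases had.lt_or_gt with h2 | h2 <;>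
    rcases hbd.lt_or_gt with h3 | h3
  · exact ⟨a, b, d, h1, h3, fun M r => Or.inl rfl⟩
  · exact ⟨a, d, b, h2, h3, fun M r => Or.inr (by
      rw [det_sub3, det_sub3]
      simp only [Matrix.cons_val_zero, Matrix.cons_val_one, Matrix.head_cons,
        Matrix.cons_val_two, Matrix.tail_cons]
      ring)⟩
  · exact absurd (h1.trans h3) h2.asymm
  · exact ⟨d, a, b, h2, h1, fun M r => Or.inl (by
      rw [det_sub3, det_sub3]
      simp only [Matrix.cons_val_zero, Matrix.cons_val_one, Matrix.head_cons,
        Matrix.cons_val_two, Matrix.tail_cons]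
      ring)⟩
  · exact ⟨b, a, d, h1, h2, fun M r => Or.inr (by
      rw [det_sub3, det_sub3]
      simp only [Matrix.cons_val_zero, Matrix.cons_val_one, Matrix.head_cons,
        Matrix.cons_val_two, Matrix.tail_cons]
      ring)⟩
  · exact absurd (h3.trans h1) h2.asymm
  · exact ⟨b, d, a, h3, h2, fun M r => Or.inl (by
      rw [det_sub3, det_sub3]
      simp only [Matrix.cons_val_zero, Matrix.cons_val_one, Matrix.head_cons,
        Matrix.cons_val_two, Matrix.tail_cons]
      ring)⟩
  · exact ⟨d, b, a, h3, h1, fun M r => Or.inr (by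
      rw [det_sub3, det_sub3]
      simp only [Matrix.cons_val_zero, Matrix.cons_val_one, Matrix.head_cons,
        Matrix.cons_val_two, Matrix.tail_cons]
      ring)⟩

set_option maxHeartbeats 1000000 in
private lemma pf_key16 {R : Type*} [CommRing R] (x12 x13 x14 x23 x24 x34 : R)
    (a b d e f g : Fin 4) (hab : a < b) (hbd : b < d) (hef : e < f) (hfg : f < g) :
    ((!![0, x12, x13, x14;
         -x12, 0, x23, x24;
         -x13, -x23, 0, x34;
         -x14, -x24, -x34, 0] : Matrix (Fin 4) (Fin 4) R).submatrix ![a, b, d] ![e, f, g]).det ∈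
      Ideal.span {x12 * (x12 * x34 - x13 * x24 + x14 * x23),
        x13 * (x12 * x34 - x13 * x24 + x14 * x23),
        x14 * (x12 * x34 - x13 * x24 + x14 * x23),
        x23 * (x12 * x34 - x13 * x24 + x14 * x23),
        x24 * (x12 * x34 - x13 * x24 + x14 * x23),
        x34 * (x12 * x34 - x13 * x24 + x14 * x23)} := by
  have h1 : x12 * (x12 * x34 - x13 * x24 + x14 * x23) ∈ Ideal.span {x12 * (x12 * x34 - x13 * x24 + x14 * x23), x13 * (x12 * x34 - x13 * x24 + x14 * x23), x14 * (x12 * x34 - x13 * x24 + x14 * x23), x23 * (x12 * x34 - x13 * x24 + x14 * x23), x24 * (x12 * x34 - x13 * x24 + x14 * x23), x34 * (x12 * x34 - x13 * x24 + x14 * x23)} := Ideal.subset_span (by simp)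
  have h2 : x13 * (x12 * x34 - x13 * x24 + x14 * x23) ∈ Ideal.span {x12 * (x12 * x34 - x13 * x24 + x14 * x23), x13 * (x12 * x34 - x13 * x24 + x14 * x23), x14 * (x12 * x34 - x13 * x24 + x14 * x23), x23 * (x12 * x34 - x13 * x24 + x14 * x23), x24 * (x12 * x34 - x13 * x24 + x14 * x23), x34 * (x12 * x34 - x13 * x24 + x14 * x23)} := Ideal.subset_span (by simp)
  have h3 : x14 * (x12 * x34 - x13 * x24 + x14 * x23) ∈ Ideal.span {x12 * (x12 * x34 - x13 * x24 + x14 * x23), x13 * (x12 * x34 - x13 * x24 + x14 * x23), x14 * (x12 * x34 - x13 * x24 + x14 * x23), x23 * (x12 * x34 - x13 * x24 + x14 * x23), x24 * (x12 * x34 - x13 * x24 + x14 * x23), x34 * (x12 * x34 - x13 * x24 + x14 * x23)} := Ideal.subset_span (by simp)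
  have h4 : x23 * (x12 * x34 - x13 * x24 + x14 * x23) ∈ Ideal.span {x12 * (x12 * x34 - x13 * x24 + x14 * x23), x13 * (x12 * x34 - x13 * x24 + x14 * x23), x14 * (x12 * x34 - x13 * x24 + x14 * x23), x23 * (x12 * x34 - x13 * x24 + x14 * x23), x24 * (x12 * x34 - x13 * x24 + x14 * x23), x34 * (x12 * x34 - x13 * x24 + x14 * x23)} := Ideal.subset_span (by simp)
  have h5 : x24 * (x12 * x34 - x13 * x24 + x14 * x23) ∈ Ideal.span {x12 * (x12 * x34 - x13 * x24 + x14 * x23), x13 * (x12 * x34 - x13 * x24 + x14 * x23), x14 * (x12 * x34 - x13 * x24 + x14 * x23), x23 * (x12 * x34 - x13 * x24 + x14 * x23), x24 * (x12 * x34 - x13 * x24 + x14 * x23), x34 * (x12 * x34 - x13 * x24 + x14 * x23)} := Ideal.subset_span (by simp)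
  have h6 : x34 * (x12 * x34 - x13 * x24 + x14 * x23) ∈ Ideal.span {x12 * (x12 * x34 - x13 * x24 + x14 * x23), x13 * (x12 * x34 - x13 * x24 + x14 * x23), x14 * (x12 * x34 - x13 * x24 + x14 * x23), x23 * (x12 * x34 - x13 * x24 + x14 * x23), x24 * (x12 * x34 - x13 * x24 + x14 * x23), x34 * (x12 * x34 - x13 * x24 + x14 * x23)} := Ideal.subset_span (by simp)
  have hz : (0 : R) ∈ Ideal.span {x12 * (x12 * x34 - x13 * x24 + x14 * x23), x13 * (x12 * x34 - x13 * x24 + x14 * x23), x14 * (x12 * x34 - x13 * x24 + x14 * x23), x23 * (x12 * x34 - x13 * x24 + x14 * x23), x24 * (x12 * x34 - x13 * x24 + x14 * x23), x34 * (x12 * x34 - x13 * x24 + x14 * x23)} := Submodule.zero_mem _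
  have aux : ∀ z w : R, w ∈ Ideal.span {x12 * (x12 * x34 - x13 * x24 + x14 * x23), x13 * (x12 * x34 - x13 * x24 + x14 * x23), x14 * (x12 * x34 - x13 * x24 + x14 * x23), x23 * (x12 * x34 - x13 * x24 + x14 * x23), x24 * (x12 * x34 - x13 * x24 + x14 * x23), x34 * (x12 * x34 - x13 * x24 + x14 * x23)} → (z = w ∨ z = -w) → z ∈ Ideal.span {x12 * (x12 * x34 - x13 * x24 + x14 * x23), x13 * (x12 * x34 - x13 * x24 + x14 * x23), x14 * (x12 * x34 - x13 * x24 + x14 * x23), x23 * (x12 * x34 - x13 * x24 + x14 * x23), x24 * (x12 * x34 - x13 * x24 + x14 * x23), x34 * (x12 * x34 - x13 * x24 + x14 * x23)} := by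
    rintro z w hw (rfl | rfl)
    · exact hw
    · exact Submodule.neg_mem _ hw
  have hrows : (a = 0 ∧ b = 1 ∧ d = 2) ∨ (a = 0 ∧ b = 1 ∧ d = 3) ∨
      (a = 0 ∧ b = 2 ∧ d = 3) ∨ (a = 1 ∧ b = 2 ∧ d = 3) := by
    revert hab hbd; revert a b d; decide
  have hcols : (e = 0 ∧ f = 1 ∧ g = 2) ∨ (e = 0 ∧ f = 1 ∧ g = 3) ∨
      (e = 0 ∧ f = 2 ∧ g = 3) ∨ (e = 1 ∧ f = 2 ∧ g = 3) := by
    revert hef hfg; revert e f g; decide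
  clear hab hbd hef hfg
  rcases hrows with ⟨rfl, rfl, rfl⟩ | ⟨rfl, rfl, rfl⟩ | ⟨rfl, rfl, rfl⟩ | ⟨rfl, rfl, rfl⟩ <;>
    rcases hcols with ⟨rfl, rfl, rfl⟩ | ⟨rfl, rfl, rfl⟩ | ⟨rfl, rfl, rfl⟩ | ⟨rfl, rfl, rfl⟩ <;>
    rw [det_sub3] <;>
    simp only [Matrix.cons_val_zero, Matrix.cons_val_one, Matrix.head_cons,
      Matrix.cons_val_two, Matrix.tail_cons, Matrix.cons_val', Matrix.cons_val_fin_one,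
      Matrix.empty_val', Matrix.head_fin_const, Matrix.cons_val_three, Matrix.of_apply,
      Fin.isValue]
  · exact aux _ _ hz (Or.inl (by ring1))
  · exact aux _ _ h1 (Or.inl (by ring1))
  · exact aux _ _ h2 (Or.inl (by ring1))
  · exact aux _ _ h4 (Or.inl (by ring1))
  · exact aux _ _ h1 (Or.inr (by ring1))
  · exact aux _ _ hz (Or.inl (by ring1))
  · exact aux _ _ h3 (Or.inl (by ring1))
  · exact aux _ _ h5 (Or.inl (by ring1))
  · exact aux _ _ h2 (Or.inr (by ring1))
  · exact aux _ _ h3 (Or.inr (by ring1))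
  · exact aux _ _ hz (Or.inl (by ring1))
  · exact aux _ _ h6 (Or.inl (by ring1))
  · exact aux _ _ h4 (Or.inr (by ring1))
  · exact aux _ _ h5 (Or.inr (by ring1))
  · exact aux _ _ h6 (Or.inr (by ring1))
  · exact aux _ _ hz (Or.inl (by ring1))

theorem three_minors_in_pfaffian_ideal {R : Type*} [CommRing R]
    (x12 x13 x14 x23 x24 x34 : R)
    (A : Matrix (Fin 4) (Fin 4) R)
    (hA : A = !![0, x12, x13, x14;
                 -x12, 0, x23, x24;
                 -x13, -x23, 0, x34;
                 -x14, -x24, -x34, 0])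
    (Pf : R) (hPf : Pf = x12 * x34 - x13 * x24 + x14 * x23) :
    (∀ r c : Fin 3 → Fin 4, Function.Injective r → Function.Injective c →
        (A.submatrix r c).det ∈
          Ideal.span {x12 * Pf, x13 * Pf, x14 * Pf, x23 * Pf, x24 * Pf, x34 * Pf}) ∧
      Ideal.span {d : R | ∃ r c : Fin 3 → Fin 4,
          Function.Injective r ∧ Function.Injective c ∧ d = (A.submatrix r c).det} ≤
        Ideal.span {x12, x13, x14, x23, x24, x34} * Ideal.span {Pf} := by
  subst hA
  subst hPf
  have main : ∀ r c : Fin 3 → Fin 4, Function.Injective r → Function.Injective c →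
      ((!![0, x12, x13, x14; -x12, 0, x23, x24; -x13, -x23, 0, x34; -x14, -x24, -x34, 0] :
          Matrix (Fin 4) (Fin 4) R).submatrix r c).det ∈
        Ideal.span {x12 * (x12 * x34 - x13 * x24 + x14 * x23),
          x13 * (x12 * x34 - x13 * x24 + x14 * x23),
          x14 * (x12 * x34 - x13 * x24 + x14 * x23),
          x23 * (x12 * x34 - x13 * x24 + x14 * x23),
          x24 * (x12 * x34 - x13 * x24 + x14 * x23),
          x34 * (x12 * x34 - x13 * x24 + x14 * x23)} := by
    intro r c hr hc
    have hr' : r = ![r 0, r 1, r 2] := by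
      funext i; fin_cases i <;> rfl
    have hc' : c = ![c 0, c 1, c 2] := by
      funext i; fin_cases i <;> rfl
    obtain ⟨p, q, s, hpq, hqs, hrow⟩ := sortRows (R := R) (r 0) (r 1) (r 2)
      (hr.ne (by decide)) (hr.ne (by decide)) (hr.ne (by decide))
    obtain ⟨p', q', s', hpq', hqs', hcol⟩ := sortCols (R := R) (c 0) (c 1) (c 2)
      (hc.ne (by decide)) (hc.ne (by decide)) (hc.ne (by decide))
    have hm := pf_key16 x12 x13 x14 x23 x24 x34 p q s p' q' s' hpq hqs hpq' hqs'
    rw [hr', hc']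
    rcases hrow (!![0, x12, x13, x14; -x12, 0, x23, x24; -x13, -x23, 0, x34;
        -x14, -x24, -x34, 0]) ![c 0, c 1, c 2] with h | h <;> rw [h] <;>
      rcases hcol (!![0, x12, x13, x14; -x12, 0, x23, x24; -x13, -x23, 0, x34;
        -x14, -x24, -x34, 0]) ![p, q, s] with h' | h' <;> rw [h'] <;>
      (try simp only [neg_neg]) <;>
      first
        | exact hm
        | exact Submodule.neg_mem _ hm
  refine ⟨main, ?_⟩
  have hle : Ideal.span {x12 * (x12 * x34 - x13 * x24 + x14 * x23),
      x13 * (x12 * x34 - x13 * x24 + x14 * x23),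
      x14 * (x12 * x34 - x13 * x24 + x14 * x23),
      x23 * (x12 * x34 - x13 * x24 + x14 * x23),
      x24 * (x12 * x34 - x13 * x24 + x14 * x23),
      x34 * (x12 * x34 - x13 * x24 + x14 * x23)} ≤
      Ideal.span {x12, x13, x14, x23, x24, x34} *
        Ideal.span {(x12 * x34 - x13 * x24 + x14 * x23 : R)} := by
    apply Ideal.span_le.2
    intro y hy
    simp only [Set.mem_insert_iff, Set.mem_singleton_iff] at hy
    rcases hy with rfl | rfl | rfl | rfl | rfl | rfl <;>
      exact Ideal.mul_mem_mul (Ideal.subset_span (by simp)) (Ideal.subset_span (by simp))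
  apply Ideal.span_le.2
  rintro y ⟨r, c, hr, hc, rfl⟩
  exact hle (main r c hr hc)
end

section
/- Let R₀ be a commutative ring with 2 invertible, R = R₀[x₁₂,…,x₃₄], and A the generic 4×4 skew-symmetric matrix. Then the radical of the ideal generated by the 4-minor (the determinant) of A equals the radical of the ideal generated by all 3-minors of A, both equal to the radical of ⟨Pf⟩ where Pf = x₁₂·x₃₄ - x₁₃·x₂₄ + x₁₄·x₂₃. -/
/-!
The 3-minors of a 4×4 matrix are, up to sign, the entries of its adjugate, and for the
skew-symmetric matrix `A` one has `adj A = Pf • A'` with `A'` skew-symmetric again. So the ideal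
of 3-minors lies in `⟨Pf⟩`, while Laplace expansion puts `det A = Pf ^ 2` into it. All three ideals
therefore sit between `⟨Pf ^ 2⟩` and `⟨Pf⟩`, which have the same radical.
-/

open Matrix MvPolynomial

theorem Fin.exists_succAbove_comp_perm_of_injective {n : ℕ} {f : Fin n → Fin (n + 1)}
    (hf : Function.Injective f) :
    ∃ (j : Fin (n + 1)) (σ : Equiv.Perm (Fin n)), f = j.succAbove ∘ σ := by
  obtain ⟨j, hj⟩ : ∃ j, j ∉ Set.range f := by
    by_contra! h
    simpa using Fintype.card_le_of_surjective f fun j => h j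
  choose σ hσ using fun i => Fin.exists_succAbove_eq fun h : f i = j => hj ⟨i, h⟩
  have hσ_inj : Function.Injective σ := fun a b hab => hf (by rw [← hσ a, ← hσ b, hab])
  exact ⟨j, Equiv.ofBijective σ hσ_inj.bijective_of_finite, funext fun i => (hσ i).symm⟩

namespace Matrix

variable {R : Type*} [CommRing R]

def minors {m n : Type*} (k : ℕ) (M : Matrix m n R) : Set R :=
  {d | ∃ (r : Fin k → m) (c : Fin k → n), Function.Injective r ∧ Function.Injective c ∧
    d = (M.submatrix r c).det}

theorem associated_det_submatrix_comp_perm {m n : Type*} [Fintype n] [DecidableEq n]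
    (M : Matrix m m R) (f g : n → m) (σ τ : Equiv.Perm n) :
    Associated (M.submatrix (f ∘ σ) (g ∘ τ)).det (M.submatrix f g).det := by
  have h : M.submatrix (f ∘ σ) (g ∘ τ) =
      ((M.submatrix f g).submatrix σ id).submatrix id τ := rfl
  rw [h, det_permute', det_permute, ← mul_assoc]
  exact associated_unit_mul_left _ _ ((τ.sign.isUnit.map (Int.castRingHom R)).mul
    (σ.sign.isUnit.map (Int.castRingHom R)))

theorem exists_associated_adjugate_of_mem_minors {n : ℕ}
    {M : Matrix (Fin (n + 1)) (Fin (n + 1)) R} {d : R} (hd : d ∈ M.minors n) :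
    ∃ i j, Associated d (M.adjugate i j) := by
  obtain ⟨r, c, hr, hc, rfl⟩ := hd
  obtain ⟨j, σ, rfl⟩ := Fin.exists_succAbove_comp_perm_of_injective hr
  obtain ⟨i, τ, rfl⟩ := Fin.exists_succAbove_comp_perm_of_injective hc
  refine ⟨i, j, (associated_det_submatrix_comp_perm M _ _ σ τ).trans ?_⟩
  rw [adjugate_fin_succ_eq_det_submatrix]
  exact (associated_unit_mul_left _ _ (isUnit_neg_one.pow _)).symm

theorem span_minors_le_span_singleton {n : ℕ} {M : Matrix (Fin (n + 1)) (Fin (n + 1)) R}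
    {a : R} (h : ∀ i j, a ∣ M.adjugate i j) : Ideal.span (M.minors n) ≤ Ideal.span {a} := by
  rw [Ideal.span_le]
  intro d hd
  obtain ⟨i, j, hij⟩ := exists_associated_adjugate_of_mem_minors hd
  exact Ideal.mem_span_singleton.mpr ((h i j).trans hij.symm.dvd)

theorem det_mem_span_minors {n : ℕ} (M : Matrix (Fin (n + 1)) (Fin (n + 1)) R) :
    M.det ∈ Ideal.span (M.minors n) := by
  rw [det_succ_column_zero]
  refine Ideal.sum_mem _ fun i _ => Ideal.mul_mem_left _ _ (Ideal.subset_span ?_)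
  exact ⟨i.succAbove, Fin.succ, Fin.succAbove_right_injective, Fin.succ_injective _, rfl⟩

end Matrix

theorem Ideal.radical_eq_radical_span_singleton {R : Type*} [CommSemiring R] {I : Ideal R}
    {a : R} {n : ℕ} (hI : I ≤ Ideal.span {a}) (ha : a ^ n ∈ I) :
    I.radical = (Ideal.span {a}).radical :=
  le_antisymm (Ideal.radical_mono hI) <| Ideal.radical_le_radical_iff.mpr <|
    Ideal.span_le.mpr <| Set.singleton_subset_iff.mpr ⟨n, ha⟩

section SkewSymmetric4

variable {R : Type*} [CommRing R] (a b c d e f : R)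

def skewSymmetric4 : Matrix (Fin 4) (Fin 4) R :=
  !![0, a, b, c; -a, 0, d, e; -b, -d, 0, f; -c, -e, -f, 0]

def pfaffian4 : R := a * f - b * e + c * d

theorem det_skewSymmetric4 :
    (skewSymmetric4 a b c d e f).det = pfaffian4 a b c d e f ^ 2 := by
  simp [skewSymmetric4, pfaffian4, det_succ_row_zero, Fin.sum_univ_succ, Fin.succAbove]
  ring

/-- The matrix on the right is minus the Hodge dual `Ã` of `A`, for which `A * Ã = -Pf • 1`. -/
theorem adjugate_skewSymmetric4 :
    (skewSymmetric4 a b c d e f).adjugate =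
      pfaffian4 a b c d e f • skewSymmetric4 (-f) e (-d) (-c) b (-a) := by
  ext i j
  rw [adjugate_fin_succ_eq_det_submatrix, det_fin_three]
  fin_cases i <;> fin_cases j <;> simp [skewSymmetric4, pfaffian4, Fin.succAbove] <;> ring

theorem radical_span_det_skewSymmetric4 :
    (Ideal.span {(skewSymmetric4 a b c d e f).det}).radical =
      (Ideal.span {pfaffian4 a b c d e f}).radical := by
  rw [det_skewSymmetric4]
  exact Ideal.radical_eq_radical_span_singleton
    (Ideal.span_singleton_le_span_singleton.mpr (dvd_pow_self _ two_ne_zero))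
    (Ideal.mem_span_singleton_self _)

theorem radical_span_minors_skewSymmetric4 :
    (Ideal.span ((skewSymmetric4 a b c d e f).minors 3)).radical =
      (Ideal.span {pfaffian4 a b c d e f}).radical := by
  refine Ideal.radical_eq_radical_span_singleton (n := 2) ?_ ?_
  · refine span_minors_le_span_singleton fun i j => ?_
    rw [adjugate_skewSymmetric4]
    exact dvd_mul_right _ _
  · rw [← det_skewSymmetric4]
    exact det_mem_span_minors _

end SkewSymmetric4

theorem radical_det_eq_radical_three_minors_eq_radical_pfaffian_general
    {R₀ : Type*} [CommRing R₀]
    (A : Matrix (Fin 4) (Fin 4) (MvPolynomial (Fin 6) R₀))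
    (hA : A = !![0, X 0, X 1, X 2;
                 -X 0, 0, X 3, X 4;
                 -X 1, -X 3, 0, X 5;
                 -X 2, -X 4, -X 5, 0])
    (Pf : MvPolynomial (Fin 6) R₀)
    (hPf : Pf = X 0 * X 5 - X 1 * X 4 + X 2 * X 3) :
    (Ideal.span {A.det}).radical =
        (Ideal.span {d : MvPolynomial (Fin 6) R₀ | ∃ r c : Fin 3 → Fin 4,
          Function.Injective r ∧ Function.Injective c ∧
            d = (A.submatrix r c).det}).radical ∧
      (Ideal.span {A.det}).radical = (Ideal.span {Pf}).radical := by
  subst hA hPf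
  have hdet := radical_span_det_skewSymmetric4
    (X 0 : MvPolynomial (Fin 6) R₀) (X 1) (X 2) (X 3) (X 4) (X 5)
  have hminors := radical_span_minors_skewSymmetric4
    (X 0 : MvPolynomial (Fin 6) R₀) (X 1) (X 2) (X 3) (X 4) (X 5)
  exact ⟨hdet.trans hminors.symm, hdet⟩

/-- Variables: 0 ↦ x₁₂, 1 ↦ x₁₃, 2 ↦ x₁₄, 3 ↦ x₂₃, 4 ↦ x₂₄, 5 ↦ x₃₄. -/
theorem radical_det_eq_radical_three_minors_eq_radical_pfaffian
    {R₀ : Type*} [CommRing R₀] (h2 : IsUnit (2 : R₀))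
    (A : Matrix (Fin 4) (Fin 4) (MvPolynomial (Fin 6) R₀))
    (hA : A = !![0, X 0, X 1, X 2;
                 -X 0, 0, X 3, X 4;
                 -X 1, -X 3, 0, X 5;
                 -X 2, -X 4, -X 5, 0])
    (Pf : MvPolynomial (Fin 6) R₀)
    (hPf : Pf = X 0 * X 5 - X 1 * X 4 + X 2 * X 3) :
    (Ideal.span {A.det}).radical =
        (Ideal.span {d : MvPolynomial (Fin 6) R₀ | ∃ r c : Fin 3 → Fin 4,
          Function.Injective r ∧ Function.Injective c ∧
            d = (A.submatrix r c).det}).radical ∧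
      (Ideal.span {A.det}).radical = (Ideal.span {Pf}).radical :=
  radical_det_eq_radical_three_minors_eq_radical_pfaffian_general A hA Pf hPf
end
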